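/- Let X : ℝ → ℝ² be a twice continuously differentiable, L-periodic (L > 0) curve with ‖X'(s)‖ = 1 for all s, injective on [0, L), and suppose the normal map Φ(s,t) = X(s) + t·R(X'(s)) is injective on [0, L) × (−r, r) for some r > 0. Let Γ = X(ℝ) denote the trace of the curve and let p ∈ ℝ² satisfy dist(p, Γ) < r. Then there exists a unique point q ∈ Γ with ‖p − q‖ = dist(p, Γ); moreover, for every s with X(s) = q one has ⟨p − q, X'(s)⟩ = 0, i.e. p − q is normal to the curve at q. (Unique nearest-point projection in the tubular neighborhood, used in Appendix A of the paper.) -/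

import Mathlib

/-!
A nearest point `q = X s` of `p` on the compact trace is a critical point of `t ↦ ‖p - X t‖²`,
so `p - q` is orthogonal to `X' s`, i.e. `p = Φ(s, t)` with `|t| = dist(p, Γ) < r`. Two nearest
points thus give two preimages of `p` under `Φ` in `[0, L) × (-r, r)`, which must coincide.
-/

/-- Rotation by 90 degrees in the Euclidean plane: `R(a₁, a₂) = (-a₂, a₁)`. -/
noncomputable def rot (a : EuclideanSpace ℝ (Fin 2)) : EuclideanSpace ℝ (Fin 2) :=
  (WithLp.equiv 2 (Fin 2 → ℝ)).symm ![-a 1, a 0]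

open Function Metric Set

lemma rot_apply_zero (a : EuclideanSpace ℝ (Fin 2)) : rot a 0 = -a 1 := rfl

lemma rot_apply_one (a : EuclideanSpace ℝ (Fin 2)) : rot a 1 = a 0 := rfl

lemma inner_eq_of_fin_two (v w : EuclideanSpace ℝ (Fin 2)) :
    (inner ℝ v w : ℝ) = v 0 * w 0 + v 1 * w 1 := by
  simp [PiLp.inner_apply, Fin.sum_univ_two, mul_comm]

lemma norm_rot (a : EuclideanSpace ℝ (Fin 2)) : ‖rot a‖ = ‖a‖ := by
  simp only [EuclideanSpace.norm_eq, Fin.sum_univ_two, rot_apply_zero, rot_apply_one,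
    Real.norm_eq_abs, sq_abs, neg_sq, add_comm]

lemma eq_inner_rot_smul_rot_of_inner_eq_zero {a v : EuclideanSpace ℝ (Fin 2)} (ha : ‖a‖ = 1)
    (h : (inner ℝ v a : ℝ) = 0) : v = (inner ℝ v (rot a) : ℝ) • rot a := by
  have ha' : a 0 * a 0 + a 1 * a 1 = 1 := by
    rw [← inner_eq_of_fin_two, real_inner_self_eq_norm_sq, ha, one_pow]
  rw [inner_eq_of_fin_two] at h
  ext i
  fin_cases i
  · change v 0 = (inner ℝ v (rot a) : ℝ) * rot a 0
    rw [inner_eq_of_fin_two, rot_apply_zero, rot_apply_one]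
    linear_combination a 0 * h - v 0 * ha'
  · change v 1 = (inner ℝ v (rot a) : ℝ) * rot a 1
    rw [inner_eq_of_fin_two, rot_apply_zero, rot_apply_one]
    linear_combination a 1 * h - v 1 * ha'

lemma exists_abs_eq_norm_and_eq_smul_rot_of_inner_eq_zero {a v : EuclideanSpace ℝ (Fin 2)}
    (ha : ‖a‖ = 1) (h : (inner ℝ v a : ℝ) = 0) : ∃ t : ℝ, |t| = ‖v‖ ∧ v = t • rot a := by
  have hv := eq_inner_rot_smul_rot_of_inner_eq_zero ha h
  refine ⟨_, ?_, hv⟩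
  conv_rhs => rw [hv]
  rw [norm_smul, norm_rot, ha, mul_one, Real.norm_eq_abs]

lemma inner_sub_deriv_eq_zero_of_norm_sub_eq_infDist {E : Type*} [NormedAddCommGroup E]
    [InnerProductSpace ℝ E] {f : ℝ → E} {p : E} {s : ℝ} (hf : DifferentiableAt ℝ f s)
    (hs : ‖p - f s‖ = infDist p (range f)) : (inner ℝ (p - f s) (deriv f s) : ℝ) = 0 := by
  have hmin : IsLocalMin (fun t => ‖p - f t‖ ^ 2) s :=
    Filter.Eventually.of_forall fun t => by
      refine pow_le_pow_left₀ (norm_nonneg _) ?_ 2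
      rw [hs, ← dist_eq_norm]
      exact infDist_le_dist_of_mem (mem_range_self t)
  have hderiv := hf.hasDerivAt.const_sub p |>.norm_sq
  rw [inner_neg_right] at hderiv
  linarith [hmin.hasDerivAt_eq_zero hderiv]

lemma exists_normalMap_eq_of_norm_sub_eq_infDist {X : ℝ → EuclideanSpace ℝ (Fin 2)} {L r : ℝ}
    {p : EuclideanSpace ℝ (Fin 2)} (hX : Differentiable ℝ X)
    (hunit : ∀ s, ‖deriv X s‖ = 1) (hper : Periodic X L) (hL : 0 < L)
    (hp : infDist p (range X) < r) {s : ℝ} (hs : ‖p - X s‖ = infDist p (range X)) :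
    ∃ s₀ ∈ Ico 0 L, X s₀ = X s ∧ ∃ t ∈ Ioo (-r) r, X s₀ + t • rot (deriv X s₀) = p := by
  obtain ⟨s₀, hs₀, hXs₀⟩ := hper.exists_mem_Ico₀ hL s
  have hs₀' : ‖p - X s₀‖ = infDist p (range X) := hXs₀ ▸ hs
  obtain ⟨t, ht, hpt⟩ := exists_abs_eq_norm_and_eq_smul_rot_of_inner_eq_zero (hunit s₀)
    (inner_sub_deriv_eq_zero_of_norm_sub_eq_infDist (hX s₀) hs₀')
  refine ⟨s₀, hs₀, hXs₀.symm, t, abs_lt.mp (ht ▸ hs₀' ▸ hp), ?_⟩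
  rw [← hpt, add_sub_cancel]

theorem stmt8_general (X : ℝ → EuclideanSpace ℝ (Fin 2)) (L : ℝ) (hL : 0 < L)
    (hX : ContDiff ℝ 2 X) (hunit : ∀ s : ℝ, ‖deriv X s‖ = 1)
    (hper : ∀ s : ℝ, X (s + L) = X s)
    (r : ℝ)
    (hinj : Set.InjOn (fun p : ℝ × ℝ => X p.1 + p.2 • rot (deriv X p.1))
      (Set.Ico 0 L ×ˢ Set.Ioo (-r) r))
    (p : EuclideanSpace ℝ (Fin 2))
    (hp : Metric.infDist p (Set.range X) < r) :
    ∃ q : EuclideanSpace ℝ (Fin 2),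
      (q ∈ Set.range X ∧ ‖p - q‖ = Metric.infDist p (Set.range X)) ∧
      (∀ q' : EuclideanSpace ℝ (Fin 2),
        q' ∈ Set.range X ∧ ‖p - q'‖ = Metric.infDist p (Set.range X) → q' = q) ∧
      (∀ s : ℝ, X s = q → (inner ℝ (p - q) (deriv X s) : ℝ) = 0) := by
  have hdiff : Differentiable ℝ X := hX.differentiable two_ne_zero
  obtain ⟨q, hq, hpq⟩ := (Periodic.compact_of_continuous hper hL.ne' hX.continuous)
    |>.exists_infDist_eq_dist (range_nonempty X) p
  rw [dist_eq_norm] at hpq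
  have normal_coords {s : ℝ} (hs : ‖p - X s‖ = infDist p (range X)) :=
    exists_normalMap_eq_of_norm_sub_eq_infDist hdiff hunit hper hL hp hs
  refine ⟨q, ⟨hq, hpq.symm⟩, ?_, ?_⟩
  · rintro _ ⟨⟨s', rfl⟩, hs'⟩
    obtain ⟨s, rfl⟩ := hq
    obtain ⟨s₀, hs₀, hXs₀, t₀, ht₀, hΦ₀⟩ := normal_coords hpq.symm
    obtain ⟨s₁, hs₁, hXs₁, t₁, ht₁, hΦ₁⟩ := normal_coords hs'
    have hst := hinj (mk_mem_prod hs₁ ht₁) (mk_mem_prod hs₀ ht₀) (hΦ₁.trans hΦ₀.symm)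
    rw [← hXs₀, ← hXs₁, (Prod.mk.inj hst).1]
  · rintro s rfl
    exact inner_sub_deriv_eq_zero_of_norm_sub_eq_infDist (hdiff s) hpq.symm

/-- Unique nearest-point projection in the tubular neighborhood (Appendix A of
the paper): any point at distance `< r` from the trace `Γ` of a closed simple
unit-speed `C²` curve with an `r`-tubular neighborhood has a unique nearest
point `q ∈ Γ`, and `p - q` is normal to the curve at `q`. -/
theorem stmt8 (X : ℝ → EuclideanSpace ℝ (Fin 2)) (L : ℝ) (hL : 0 < L)
    (hX : ContDiff ℝ 2 X) (hunit : ∀ s : ℝ, ‖deriv X s‖ = 1)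
    (hper : ∀ s : ℝ, X (s + L) = X s)
    (hXinj : Set.InjOn X (Set.Ico 0 L))
    (r : ℝ) (hr : 0 < r)
    (hinj : Set.InjOn (fun p : ℝ × ℝ => X p.1 + p.2 • rot (deriv X p.1))
      (Set.Ico 0 L ×ˢ Set.Ioo (-r) r))
    (p : EuclideanSpace ℝ (Fin 2))
    (hp : Metric.infDist p (Set.range X) < r) :
    ∃ q : EuclideanSpace ℝ (Fin 2),
      (q ∈ Set.range X ∧ ‖p - q‖ = Metric.infDist p (Set.range X)) ∧
      (∀ q' : EuclideanSpace ℝ (Fin 2),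
        q' ∈ Set.range X ∧ ‖p - q'‖ = Metric.infDist p (Set.range X) → q' = q) ∧
      (∀ s : ℝ, X s = q → (inner ℝ (p - q) (deriv X s) : ℝ) = 0) :=
  stmt8_general X L hL hX hunit hper r hinj p hp
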